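/- If the output Q̂ of MSBO satisfies the policy-loss bound via its Bellman residual, then max_{π ∈ Π_Q} J(π) − J(π_{Q̂}) ≤ (2√C_eff/(1-γ)) · ‖Q̂ − TQ̂‖_{2,μ}, where C_eff := max_{π ∈ Π_Q} ‖w_π‖²_{2,μ}. -/

import Mathlib

open scoped BigOperators

/-- Time-`t` state-action marginal distribution of a policy in a finite MDP. -/
noncomputable def marg {S A : Type*} [Fintype S] [Fintype A]
    (d0 : S → ℝ) (P : S → A → S → ℝ) (pol : S → A → ℝ) : ℕ → S → A → ℝ
  | 0 => fun s a => d0 s * pol s a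
  | (t + 1) => fun s' a' => (∑ s, ∑ a, marg d0 P pol t s a * P s a s') * pol s' a'

/-- Normalized discounted state-action occupancy `d_π(s,a)`. -/
noncomputable def occ {S A : Type*} [Fintype S] [Fintype A]
    (γ : ℝ) (d0 : S → ℝ) (P : S → A → S → ℝ) (pol : S → A → ℝ) (s : S) (a : A) : ℝ :=
  (1 - γ) * ∑' t : ℕ, γ ^ t * marg d0 P pol t s a

/-- Expected discounted return `J(π)`. -/
noncomputable def Jret {S A : Type*} [Fintype S] [Fintype A]
    (γ : ℝ) (d0 : S → ℝ) (P : S → A → S → ℝ) (R : S → A → ℝ) (pol : S → A → ℝ) : ℝ :=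
  ∑' t : ℕ, γ ^ t * ∑ s, ∑ a, marg d0 P pol t s a * R s a

/-- Bellman optimality operator `(T Q)(s,a) = R(s,a) + γ Σ_{s'} P(s'|s,a) max_{a'} Q(s',a')`. -/
noncomputable def bellmanT {S A : Type*} [Fintype S] [Fintype A] [Nonempty A]
    (γ : ℝ) (P : S → A → S → ℝ) (R : S → A → ℝ) (Q : S → A → ℝ) (s : S) (a : A) : ℝ :=
  R s a + γ * ∑ s', P s a s' * (⨆ a', Q s' a')

/-- A deterministic policy viewed as a stochastic policy. -/
noncomputable def detPol {S A : Type*} [DecidableEq A] (g : S → A) : S → A → ℝ :=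
  fun s a => if a = g s then 1 else 0

/-!
Telescoping `Q̂` along the state-action marginals of a policy `π` gives the performance-difference
identity `(1 - γ) J(π) = (1 - γ) E_{d₀,π}[Q̂] - E_{d_π}[Q̂ - T^π Q̂]`, where `T^π` is the Bellman
evaluation operator. For the greedy policy `π_Q̂` one has `T^π Q̂ = T Q̂`, while for every other
`π ∈ Π_Q` both `T^π Q̂ ≤ T Q̂` and `E_{d₀,π}[Q̂] ≤ E_{d₀,π_Q̂}[Q̂]`. Hence
`(1 - γ) (J(π) - J(π_Q̂)) ≤ E_{d_{π_Q̂}}[Q̂ - T Q̂] - E_{d_π}[Q̂ - T Q̂]`, and writing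
`E_d[f] = E_μ[(d / μ) f]`, Cauchy–Schwarz bounds each term by `√C_eff ‖Q̂ - T Q̂‖_{2,μ}`.
-/

open Finset

noncomputable def policyAvg {S A : Type*} [Fintype A] (pol Q : S → A → ℝ) (s : S) : ℝ :=
  ∑ a, pol s a * Q s a

noncomputable def policyBellman {S A : Type*} [Fintype S] [Fintype A] (γ : ℝ)
    (P : S → A → S → ℝ) (R pol Q : S → A → ℝ) (s : S) (a : A) : ℝ :=
  R s a + γ * ∑ s', P s a s' * policyAvg pol Q s'

section PolicyEvaluation

variable {S A : Type*} [Fintype A]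

lemma detPol_mem_stdSimplex [DecidableEq A] (g : S → A) (s : S) :
    detPol g s ∈ stdSimplex ℝ A :=
  ⟨fun a => by unfold detPol; split_ifs <;> norm_num, by simp [detPol]⟩

lemma policyAvg_detPol [DecidableEq A] (g : S → A) (Q : S → A → ℝ) (s : S) :
    policyAvg (detPol g) Q s = Q s (g s) := by
  simp [policyAvg, detPol, ite_mul]

lemma policyAvg_le_iSup {pol : S → A → ℝ} {s : S} (hpol : pol s ∈ stdSimplex ℝ A)
    (Q : S → A → ℝ) : policyAvg pol Q s ≤ ⨆ a, Q s a :=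
  calc policyAvg pol Q s ≤ ∑ a, pol s a * ⨆ a', Q s a' :=
        sum_le_sum fun a _ => mul_le_mul_of_nonneg_left
          (le_ciSup (Finite.bddAbove_range _) a) (hpol.1 a)
    _ = ⨆ a, Q s a := by rw [← sum_mul, hpol.2, one_mul]

lemma policyBellman_le_bellmanT [Fintype S] [Nonempty A] {γ : ℝ} {P : S → A → S → ℝ}
    {pol : S → A → ℝ}
    (hγ : 0 ≤ γ) (hP : ∀ s a s', 0 ≤ P s a s') (hpol : ∀ s, pol s ∈ stdSimplex ℝ A)
    (R Q : S → A → ℝ) (s : S) (a : A) :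
    policyBellman γ P R pol Q s a ≤ bellmanT γ P R Q s a := by
  unfold policyBellman bellmanT
  gcongr with s'
  · exact hP s a s'
  · exact policyAvg_le_iSup (hpol s') Q

lemma policyBellman_detPol_of_greedy [Fintype S] [Nonempty A] [DecidableEq A] (γ : ℝ)
    (P : S → A → S → ℝ) (R : S → A → ℝ) {Q : S → A → ℝ} {g : S → A}
    (hg : ∀ s a, Q s a ≤ Q s (g s)) :
    policyBellman γ P R (detPol g) Q = bellmanT γ P R Q := by
  have hsup : ∀ s, (⨆ a, Q s a) = Q s (g s) := fun s =>
    le_antisymm (ciSup_le (hg s)) (le_ciSup (Finite.bddAbove_range _) (g s))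
  ext s a
  simp only [policyBellman, bellmanT, policyAvg_detPol, hsup]

end PolicyEvaluation

section Marginals

variable {S A : Type*} [Fintype S] [Fintype A] {γ : ℝ} {d0 : S → ℝ} {P : S → A → S → ℝ}
  {pol : S → A → ℝ}

lemma marg_nonneg (hd0 : ∀ s, 0 ≤ d0 s) (hP : ∀ s a s', 0 ≤ P s a s')
    (hpol : ∀ s a, 0 ≤ pol s a) (t : ℕ) (s : S) (a : A) : 0 ≤ marg d0 P pol t s a := by
  induction t generalizing s a with
  | zero => exact mul_nonneg (hd0 s) (hpol s a)
  | succ t ih => exact mul_nonneg (sum_nonneg fun s' _ => sum_nonneg fun a' _ =>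
      mul_nonneg (ih s' a') (hP s' a' s)) (hpol s a)

lemma sum_marg_zero_mul (Q : S → A → ℝ) :
    ∑ s, ∑ a, marg d0 P pol 0 s a * Q s a = ∑ s, d0 s * policyAvg pol Q s := by
  simp only [marg, policyAvg, mul_sum, mul_assoc]

lemma sum_marg_succ_mul (Q : S → A → ℝ) (t : ℕ) :
    ∑ s, ∑ a, marg d0 P pol (t + 1) s a * Q s a
      = ∑ s, ∑ a, marg d0 P pol t s a * ∑ s', P s a s' * policyAvg pol Q s' := by
  calc _ = ∑ s', (∑ s, ∑ a, marg d0 P pol t s a * P s a s') * policyAvg pol Q s' := by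
        simp only [marg, policyAvg, mul_sum, mul_assoc]
    _ = _ := by
        simp only [sum_mul, mul_sum, mul_assoc]
        rw [Finset.sum_comm]
        exact sum_congr rfl fun s _ => Finset.sum_comm

lemma sum_marg (hd0 : ∑ s, d0 s = 1) (hP : ∀ s a, ∑ s', P s a s' = 1)
    (hpol : ∀ s, ∑ a, pol s a = 1) (t : ℕ) : ∑ s, ∑ a, marg d0 P pol t s a = 1 := by
  have hone : ∀ s, policyAvg pol 1 s = 1 := by simpa [policyAvg] using hpol
  induction t with
  | zero => simpa [hone, hd0] using sum_marg_zero_mul (d0 := d0) (P := P) (pol := pol) 1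
  | succ t ih => simpa [hone, hP, ih] using sum_marg_succ_mul (d0 := d0) (P := P) (pol := pol) 1 t

lemma marg_le_one (hd0 : d0 ∈ stdSimplex ℝ S) (hP : ∀ s a, P s a ∈ stdSimplex ℝ S)
    (hpol : ∀ s, pol s ∈ stdSimplex ℝ A) (t : ℕ) (s : S) (a : A) :
    marg d0 P pol t s a ≤ 1 := by
  have hnn := marg_nonneg hd0.1 (fun s a => (hP s a).1) (fun s => (hpol s).1) t
  calc marg d0 P pol t s a ≤ ∑ a, marg d0 P pol t s a :=
        single_le_sum (fun a _ => hnn s a) (mem_univ a)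
    _ ≤ ∑ s, ∑ a, marg d0 P pol t s a :=
        single_le_sum (f := fun s => ∑ a, marg d0 P pol t s a)
          (fun s _ => sum_nonneg fun a _ => hnn s a) (mem_univ s)
    _ = 1 := sum_marg hd0.2 (fun s a => (hP s a).2) (fun s => (hpol s).2) t

lemma occ_nonneg (hγ0 : 0 ≤ γ) (hγ1 : γ ≤ 1) (hd0 : ∀ s, 0 ≤ d0 s)
    (hP : ∀ s a s', 0 ≤ P s a s') (hpol : ∀ s a, 0 ≤ pol s a) (s : S) (a : A) :
    0 ≤ occ γ d0 P pol s a :=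
  mul_nonneg (sub_nonneg.2 hγ1) <| tsum_nonneg fun t =>
    mul_nonneg (pow_nonneg hγ0 t) (marg_nonneg hd0 hP hpol t s a)

end Marginals

section Returns

variable {S A : Type*} [Fintype S] [Fintype A] {γ : ℝ} {d0 : S → ℝ} {P : S → A → S → ℝ}
  {pol : S → A → ℝ}

lemma summable_pow_mul_marg (hγ0 : 0 ≤ γ) (hγ1 : γ < 1) (hd0 : d0 ∈ stdSimplex ℝ S)
    (hP : ∀ s a, P s a ∈ stdSimplex ℝ S) (hpol : ∀ s, pol s ∈ stdSimplex ℝ A) (s : S) (a : A) :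
    Summable fun t => γ ^ t * marg d0 P pol t s a :=
  (summable_geometric_of_lt_one hγ0 hγ1).of_nonneg_of_le
    (fun t => mul_nonneg (pow_nonneg hγ0 t)
      (marg_nonneg hd0.1 (fun s a => (hP s a).1) (fun s => (hpol s).1) t s a))
    (fun t => mul_le_of_le_one_right (pow_nonneg hγ0 t) (marg_le_one hd0 hP hpol t s a))

lemma summable_pow_mul_sum_marg_mul (hγ0 : 0 ≤ γ) (hγ1 : γ < 1) (hd0 : d0 ∈ stdSimplex ℝ S)
    (hP : ∀ s a, P s a ∈ stdSimplex ℝ S) (hpol : ∀ s, pol s ∈ stdSimplex ℝ A)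
    (h : S → A → ℝ) :
    Summable fun t => γ ^ t * ∑ s, ∑ a, marg d0 P pol t s a * h s a := by
  simp only [mul_sum, ← mul_assoc]
  exact summable_sum fun s _ => summable_sum fun a _ =>
    (summable_pow_mul_marg hγ0 hγ1 hd0 hP hpol s a).mul_right (h s a)

lemma sum_occ_mul (hγ0 : 0 ≤ γ) (hγ1 : γ < 1) (hd0 : d0 ∈ stdSimplex ℝ S)
    (hP : ∀ s a, P s a ∈ stdSimplex ℝ S) (hpol : ∀ s, pol s ∈ stdSimplex ℝ A)
    (h : S → A → ℝ) :
    ∑ s, ∑ a, occ γ d0 P pol s a * h s a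
      = (1 - γ) * ∑' t, γ ^ t * ∑ s, ∑ a, marg d0 P pol t s a * h s a := by
  have hsum := fun s a => (summable_pow_mul_marg hγ0 hγ1 hd0 hP hpol s a).mul_right (h s a)
  calc ∑ s, ∑ a, occ γ d0 P pol s a * h s a
      = (1 - γ) * ∑ s, ∑ a, ∑' t, γ ^ t * marg d0 P pol t s a * h s a := by
        simp only [occ, mul_sum, mul_assoc, ← tsum_mul_right]
    _ = (1 - γ) * ∑' t, ∑ s, ∑ a, γ ^ t * marg d0 P pol t s a * h s a := by
        rw [Summable.tsum_finsetSum fun s _ => summable_sum fun a _ => hsum s a]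
        simp only [Summable.tsum_finsetSum fun a _ => hsum _ a]
    _ = _ := by simp only [mul_sum, mul_assoc]

lemma Jret_eq_sub_tsum (hγ0 : 0 ≤ γ) (hγ1 : γ < 1) (hd0 : d0 ∈ stdSimplex ℝ S)
    (hP : ∀ s a, P s a ∈ stdSimplex ℝ S) (hpol : ∀ s, pol s ∈ stdSimplex ℝ A)
    (R Q : S → A → ℝ) :
    Jret γ d0 P R pol = ∑ s, d0 s * policyAvg pol Q s - ∑' t, γ ^ t *
      ∑ s, ∑ a, marg d0 P pol t s a * (Q s a - policyBellman γ P R pol Q s a) := by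
  set v : ℕ → ℝ := fun t => γ ^ t * ∑ s, ∑ a, marg d0 P pol t s a * Q s a
  set r : ℕ → ℝ := fun t => γ ^ t * ∑ s, ∑ a, marg d0 P pol t s a * R s a
  have hv := summable_pow_mul_sum_marg_mul hγ0 hγ1 hd0 hP hpol Q
  have hr := summable_pow_mul_sum_marg_mul hγ0 hγ1 hd0 hP hpol R
  have hstep : ∀ t, γ ^ t *
      ∑ s, ∑ a, marg d0 P pol t s a * (Q s a - policyBellman γ P R pol Q s a)
        = v t - r t - v (t + 1) := by
    intro t
    have hsplit : ∑ s, ∑ a, marg d0 P pol t s a * (Q s a - policyBellman γ P R pol Q s a)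
        = ∑ s, ∑ a, marg d0 P pol t s a * Q s a - ∑ s, ∑ a, marg d0 P pol t s a * R s a
          - γ * ∑ s, ∑ a, marg d0 P pol t s a * ∑ s', P s a s' * policyAvg pol Q s' := by
      simp only [policyBellman, mul_sub, mul_add, sum_sub_distrib, sum_add_distrib, mul_sum,
        mul_left_comm _ γ, sub_sub]
    rw [hsplit, ← sum_marg_succ_mul]
    simp only [v, r, pow_succ]
    ring
  rw [tsum_congr hstep, Summable.tsum_sub (hv.sub hr) ((summable_nat_add_iff 1).2 hv),
    Summable.tsum_sub hv hr, hv.tsum_eq_zero_add]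
  simp only [pow_zero, one_mul, sum_marg_zero_mul]
  unfold Jret
  ring

end Returns

section PerformanceDifference

variable {S A : Type*} [Fintype S] [Fintype A] {γ : ℝ} {d0 : S → ℝ} {P : S → A → S → ℝ}

lemma one_sub_mul_Jret {pol : S → A → ℝ} (hγ0 : 0 ≤ γ) (hγ1 : γ < 1)
    (hd0 : d0 ∈ stdSimplex ℝ S) (hP : ∀ s a, P s a ∈ stdSimplex ℝ S)
    (hpol : ∀ s, pol s ∈ stdSimplex ℝ A) (R Q : S → A → ℝ) :
    (1 - γ) * Jret γ d0 P R pol = (1 - γ) * ∑ s, d0 s * policyAvg pol Q s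
      - ∑ s, ∑ a, occ γ d0 P pol s a * (Q s a - policyBellman γ P R pol Q s a) := by
  rw [Jret_eq_sub_tsum hγ0 hγ1 hd0 hP hpol R Q, sum_occ_mul hγ0 hγ1 hd0 hP hpol]
  ring

lemma one_sub_mul_Jret_detPol_le [Nonempty A] [DecidableEq A] (hγ0 : 0 ≤ γ) (hγ1 : γ < 1)
    (hd0 : d0 ∈ stdSimplex ℝ S) (hP : ∀ s a, P s a ∈ stdSimplex ℝ S) (R Q : S → A → ℝ)
    (g : S → A) :
    (1 - γ) * Jret γ d0 P R (detPol g) ≤ (1 - γ) * ∑ s, d0 s * Q s (g s)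
      - ∑ s, ∑ a, occ γ d0 P (detPol g) s a * (Q s a - bellmanT γ P R Q s a) := by
  have hpol := detPol_mem_stdSimplex g
  rw [one_sub_mul_Jret hγ0 hγ1 hd0 hP hpol R Q]
  simp only [policyAvg_detPol]
  gcongr with s _ a _
  · exact occ_nonneg hγ0 hγ1.le hd0.1 (fun s a => (hP s a).1) (fun s => (hpol s).1) s a
  · exact policyBellman_le_bellmanT hγ0 (fun s a => (hP s a).1) hpol R Q s a

lemma one_sub_mul_Jret_detPol_of_greedy [Nonempty A] [DecidableEq A] (hγ0 : 0 ≤ γ)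
    (hγ1 : γ < 1) (hd0 : d0 ∈ stdSimplex ℝ S) (hP : ∀ s a, P s a ∈ stdSimplex ℝ S)
    (R : S → A → ℝ) {Q : S → A → ℝ} {g : S → A} (hg : ∀ s a, Q s a ≤ Q s (g s)) :
    (1 - γ) * Jret γ d0 P R (detPol g) = (1 - γ) * ∑ s, d0 s * Q s (g s)
      - ∑ s, ∑ a, occ γ d0 P (detPol g) s a * (Q s a - bellmanT γ P R Q s a) := by
  rw [one_sub_mul_Jret hγ0 hγ1 hd0 hP (detPol_mem_stdSimplex g) R Q,
    policyBellman_detPol_of_greedy γ P R hg]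
  simp only [policyAvg_detPol]

end PerformanceDifference

lemma abs_sum_mul_le_sqrt_mul_sqrt_of_pos {S A : Type*} [Fintype S] [Fintype A]
    (μ w h : S → A → ℝ) (hμ : ∀ s a, 0 < μ s a) :
    |∑ s, ∑ a, w s a * h s a|
      ≤ √(∑ s, ∑ a, μ s a * (w s a / μ s a) ^ 2) * √(∑ s, ∑ a, μ s a * h s a ^ 2) := by
  have hcs : ∀ f : S → A → ℝ, ∑ s, ∑ a, w s a * f s a
      ≤ √(∑ s, ∑ a, μ s a * (w s a / μ s a) ^ 2) * √(∑ s, ∑ a, μ s a * f s a ^ 2) := by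
    intro f
    have hprod : ∀ s a, w s a * f s a = (√(μ s a) * (w s a / μ s a)) * (√(μ s a) * f s a) := by
      intro s a
      rw [mul_mul_mul_comm, Real.mul_self_sqrt (hμ s a).le, ← mul_assoc,
        mul_div_cancel₀ _ (hμ s a).ne']
    have hsq : ∀ s a (x : ℝ), μ s a * x ^ 2 = (√(μ s a) * x) ^ 2 := fun s a x => by
      rw [mul_pow, Real.sq_sqrt (hμ s a).le]
    simp only [hprod, hsq, ← Fintype.sum_prod_type']
    exact Real.sum_mul_le_sqrt_mul_sqrt _ _ _
  refine abs_le.2 ⟨?_, hcs h⟩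
  simpa [neg_le] using hcs (-h)

theorem stmt11_general {S A ι : Type*} [Fintype S] [Fintype A] [Nonempty A] [DecidableEq A]
    [Fintype ι] [Nonempty ι]
    (γ : ℝ) (hγ0 : 0 ≤ γ) (hγ1 : γ < 1)
    (d0 : S → ℝ) (hd0 : ∀ s, 0 ≤ d0 s) (hd0sum : ∑ s, d0 s = 1)
    (P : S → A → S → ℝ) (hP : ∀ s a s', 0 ≤ P s a s') (hPsum : ∀ s a, ∑ s', P s a s' = 1)
    (R : S → A → ℝ)
    (μ : S → A → ℝ) (hμ : ∀ s a, 0 < μ s a)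
    (Qs : ι → S → A → ℝ)
    (g : ι → S → A) (hg : ∀ i s a, Qs i s a ≤ Qs i s (g i s)) (i : ι)
    (Ceff : ℝ)
    (hCeff : Ceff = ⨆ j, ∑ s, ∑ a, μ s a * (occ γ d0 P (detPol (g j)) s a / μ s a) ^ 2) :
    (⨆ j, Jret γ d0 P R (detPol (g j))) - Jret γ d0 P R (detPol (g i))
      ≤ (2 * Real.sqrt Ceff / (1 - γ)) *
        Real.sqrt (∑ s, ∑ a, μ s a * (Qs i s a - bellmanT γ P R (Qs i) s a) ^ 2) := by
  set Q := Qs i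
  set E := ∑ s, ∑ a, μ s a * (Q s a - bellmanT γ P R Q s a) ^ 2
  have hd0' : d0 ∈ stdSimplex ℝ S := ⟨hd0, hd0sum⟩
  have hP' : ∀ s a, P s a ∈ stdSimplex ℝ S := fun s a => ⟨hP s a, hPsum s a⟩
  have hcoverage :
      ∀ j, ∑ s, ∑ a, μ s a * (occ γ d0 P (detPol (g j)) s a / μ s a) ^ 2 ≤ Ceff := by
    rw [hCeff]
    exact le_ciSup (Finite.bddAbove_range _)
  have hresidual : ∀ j, |∑ s, ∑ a, occ γ d0 P (detPol (g j)) s a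
      * (Q s a - bellmanT γ P R Q s a)| ≤ √Ceff * √E := fun j =>
    (abs_sum_mul_le_sqrt_mul_sqrt_of_pos μ _ _ hμ).trans <|
      mul_le_mul_of_nonneg_right (Real.sqrt_le_sqrt (hcoverage j)) (Real.sqrt_nonneg E)
  have hgap : ∀ j, (1 - γ) * (Jret γ d0 P R (detPol (g j)) - Jret γ d0 P R (detPol (g i)))
      ≤ 2 * (√Ceff * √E) := fun j => by
    have hJi := one_sub_mul_Jret_detPol_of_greedy hγ0 hγ1 hd0' hP' R (Q := Q) (hg i)
    have hJj := one_sub_mul_Jret_detPol_le hγ0 hγ1 hd0' hP' R Q (g j)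
    have hinit : (1 - γ) * ∑ s, d0 s * Q s (g j s) ≤ (1 - γ) * ∑ s, d0 s * Q s (g i s) :=
      mul_le_mul_of_nonneg_left (sum_le_sum fun s _ =>
        mul_le_mul_of_nonneg_left (hg i s (g j s)) (hd0 s)) (sub_nonneg.2 hγ1.le)
    linarith [abs_le.1 (hresidual i), abs_le.1 (hresidual j)]
  rw [sub_le_iff_le_add]
  refine ciSup_le fun j => ?_
  rw [← sub_le_iff_le_add, div_mul_eq_mul_div, le_div_iff₀ (sub_pos.2 hγ1)]
  linarith [hgap j]

/-- MSBO policy-loss bound via the Bellman residual: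
    `max_{π∈Π_Q} J(π) - J(π_Q̂) ≤ (2√C_eff/(1-γ)) ‖Q̂ - TQ̂‖_{2,μ}`. -/
theorem stmt11 {S A ι : Type*} [Fintype S] [Fintype A] [Nonempty A] [DecidableEq A]
    [Fintype ι] [Nonempty ι]
    (γ : ℝ) (hγ0 : 0 ≤ γ) (hγ1 : γ < 1)
    (d0 : S → ℝ) (hd0 : ∀ s, 0 ≤ d0 s) (hd0sum : ∑ s, d0 s = 1)
    (P : S → A → S → ℝ) (hP : ∀ s a s', 0 ≤ P s a s') (hPsum : ∀ s a, ∑ s', P s a s' = 1)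
    (R : S → A → ℝ) (Vmax : ℝ)
    (μ : S → A → ℝ) (hμ : ∀ s a, 0 < μ s a) (hμsum : ∑ s, ∑ a, μ s a = 1)
    (Qs : ι → S → A → ℝ) (hQs : ∀ i s a, Qs i s a ∈ Set.Icc (0 : ℝ) Vmax)
    (g : ι → S → A) (hg : ∀ i s a, Qs i s a ≤ Qs i s (g i s)) (i : ι)
    (Ceff : ℝ)
    (hCeff : Ceff = ⨆ j, ∑ s, ∑ a, μ s a * (occ γ d0 P (detPol (g j)) s a / μ s a) ^ 2) :
    (⨆ j, Jret γ d0 P R (detPol (g j))) - Jret γ d0 P R (detPol (g i))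
      ≤ (2 * Real.sqrt Ceff / (1 - γ)) *
        Real.sqrt (∑ s, ∑ a, μ s a * (Qs i s a - bellmanT γ P R (Qs i) s a) ^ 2) :=
  stmt11_general γ hγ0 hγ1 d0 hd0 hd0sum P hP hPsum R μ hμ Qs g hg i Ceff hCeff
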